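/- arXiv:1702.07047 — 8 statements merged into one kernel-verified Lean document; each statement's English description precedes it below -/
import Mathlib

section
/- Let K be a field, γ, δ ∈ K, and let (τ_n) satisfy the autonomous Somos-5 recurrence τ_{n-3}τ_{n+2} = γτ_{n-2}τ_{n+1} + δτ_{n-1}τ_n (all τ_n ≠ 0). Define k_n = τ_{n-3}τ_n and l_n = τ_{n-2}τ_{n-1}. Then k_{n+1}k_{n-1} = γk_n l_n + δl_n² and l_{n+1}l_{n-1} = k_n l_n, i.e. (k_n, l_n) solves the Laurentified multiplicative QRT system with a₁ = a₃ = 0, a₂ = 1, a₅ = γ, a₆ = δ. -/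
theorem stmt_8 {K : Type*} [Field K] (γ δ : K) (τ : ℤ → K)
    (hτne : ∀ n : ℤ, τ n ≠ 0)
    (hτ : ∀ n : ℤ, τ (n - 3) * τ (n + 2) = γ * τ (n - 2) * τ (n + 1) + δ * τ (n - 1) * τ n)
    (k l : ℤ → K) (hk : ∀ n : ℤ, k n = τ (n - 3) * τ n) (hl : ∀ n : ℤ, l n = τ (n - 2) * τ (n - 1)) :
    ∀ n : ℤ, k (n + 1) * k (n - 1) = γ * k n * l n + δ * l n ^ 2 ∧
      l (n + 1) * l (n - 1) = k n * l n := by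
  intro n
  have h := hτ (n - 1)
  simp only [hk, hl,
    show n + 1 - 3 = n - 2 from by ring, show n - 1 - 3 = n - 4 from by ring,
    show n + 1 - 2 = n - 1 from by ring, show n + 1 - 1 = n from by ring,
    show n - 1 - 2 = n - 3 from by ring, show n - 1 - 1 = n - 2 from by ring,
    show n - 1 - 3 = n - 4 from by ring, show n - 1 + 2 = n + 1 from by ring,
    show n - 1 + 1 = n from by ring] at h ⊢
  constructor
  · linear_combination (τ (n - 2) * τ (n - 1)) * h
  · ring
end

section
/- Let K be a field, α ∈ K, and suppose (e_n) satisfies e_{n-1}e_{n-2}²e_{n-5} + e_{n-1}²e_{n-4}² + e_n e_{n-3}²e_{n-4} = α e_{n-2}²e_{n-3}² with all e_n ≠ 0. Define k_n = e_{n+1}e_{n-2} and l_n = e_n e_{n-1}. Then k_{n+1}l_{n-1} = -(k_{n-1}l_{n+1} + k_n² - αl_n²) and l_{n+1}l_{n-1} = k_n l_n, i.e. (k_n, l_n) solves the Laurentified additive QRT system with a₁ = a₃ = a₄ = 0, a₂ = 1, a₅ = -α. -/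
theorem stmt_9 {K : Type*} [Field K] (α : K) (e : ℤ → K)
    (hene : ∀ n : ℤ, e n ≠ 0)
    (he : ∀ n : ℤ, e (n - 1) * e (n - 2) ^ 2 * e (n - 5) + e (n - 1) ^ 2 * e (n - 4) ^ 2 +
      e n * e (n - 3) ^ 2 * e (n - 4) = α * e (n - 2) ^ 2 * e (n - 3) ^ 2)
    (k l : ℤ → K) (hk : ∀ n : ℤ, k n = e (n + 1) * e (n - 2)) (hl : ∀ n : ℤ, l n = e n * e (n - 1)) :
    ∀ n : ℤ, k (n + 1) * l (n - 1) = -(k (n - 1) * l (n + 1) + k n ^ 2 - α * l n ^ 2) ∧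
      l (n + 1) * l (n - 1) = k n * l n := by
  intro n
  have h := he (n + 2)
  have e1 : n + 2 - 1 = n + 1 := by ring
  have e2 : n + 2 - 2 = n := by ring
  have e3 : n + 2 - 3 = n - 1 := by ring
  have e4 : n + 2 - 4 = n - 2 := by ring
  have e5 : n + 2 - 5 = n - 3 := by ring
  rw [e1, e2, e3, e4, e5] at h
  have f1 : n + 1 + 1 = n + 2 := by ring
  have f2 : n + 1 - 2 = n - 1 := by ring
  have f3 : n - 1 + 1 = n := by ring
  have f4 : n - 1 - 2 = n - 3 := by ring
  have f5 : n - 1 - 1 = n - 2 := by ring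
  have f6 : n + 1 - 1 = n := by ring
  constructor
  · rw [hk, hk, hk, hl, hl, hl]; simp only [f1, f2, f3, f4, f5, f6]
    linear_combination h
  · rw [hl, hl, hk, hl]; simp only [f3, f5, f6]
    ring
end

section
/- Let K be a field, α ∈ K, and suppose (e_n) satisfies e_{n-1}e_{n-2}²e_{n-5} + e_{n-1}²e_{n-4}² + e_n e_{n-3}²e_{n-4} = α e_{n-2}²e_{n-3}² with all e_n ≠ 0. Set u_n = e_n e_{n+3}/(e_{n+1}e_{n+2}). Then u satisfies the DTKQ-2 recurrence u_{n+1} + u_{n-1} = (α - u_n²)/u_n. -/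
theorem stmt_10 {K : Type*} [Field K] (α : K) (e : ℤ → K)
    (hene : ∀ n : ℤ, e n ≠ 0)
    (he : ∀ n : ℤ, e (n - 1) * e (n - 2) ^ 2 * e (n - 5) + e (n - 1) ^ 2 * e (n - 4) ^ 2 +
      e n * e (n - 3) ^ 2 * e (n - 4) = α * e (n - 2) ^ 2 * e (n - 3) ^ 2)
    (u : ℤ → K) (hu : ∀ n : ℤ, u n = e n * e (n + 3) / (e (n + 1) * e (n + 2))) :
    ∀ n : ℤ, u (n + 1) + u (n - 1) = (α - u n ^ 2) / u n := by
  intro n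
  have h := he (n + 4)
  have e1 : (n : ℤ) + 4 - 1 = n + 3 := by ring
  have e2 : (n : ℤ) + 4 - 2 = n + 2 := by ring
  have e3 : (n : ℤ) + 4 - 3 = n + 1 := by ring
  have e4 : (n : ℤ) + 4 - 4 = n := by ring
  have e5 : (n : ℤ) + 4 - 5 = n - 1 := by ring
  rw [e1, e2, e3, e4, e5] at h
  rw [hu (n + 1), hu (n - 1), hu n]
  have a1 : (n : ℤ) + 1 + 1 = n + 2 := by ring
  have a2 : (n : ℤ) + 1 + 2 = n + 3 := by ring
  have a3 : (n : ℤ) + 1 + 3 = n + 4 := by ring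
  have b1 : (n : ℤ) - 1 + 1 = n := by ring
  have b2 : (n : ℤ) - 1 + 2 = n + 1 := by ring
  have b3 : (n : ℤ) - 1 + 3 = n + 2 := by ring
  rw [a1, a2, a3, b1, b2, b3]
  have h0 := hene n
  have h1 := hene (n + 1)
  have h2 := hene (n + 2)
  have h3 := hene (n + 3)
  set A := e (n - 1) with hA
  set B := e n with hB
  set C := e (n + 1) with hC
  set D := e (n + 2) with hD
  set E := e (n + 3) with hE
  set F := e (n + 4) with hF
  field_simp
  linear_combination h
end

section
/- The quantity J = a₁u₀²u₁² + a₂u₀u₁(u₀+u₁) + a₃(u₀²+u₁²) + a₄u₀u₁ + a₅(u₀+u₁) is invariant under the additive symmetric QRT map: if u₂ satisfies u₂ + u₀ = -(a₂u₁² + a₄u₁ + a₅)/(a₁u₁² + a₂u₁ + a₃) (with a₁u₁² + a₂u₁ + a₃ ≠ 0), then J(u₁, u₂) = J(u₀, u₁). -/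
/-! Fixing `u₁`, the polynomial `J(u₁, y)` is quadratic in `y` with leading coefficient
`a₁u₁² + a₂u₁ + a₃` and linear coefficient `a₂u₁² + a₄u₁ + a₅`, and `J` is symmetric. So the QRT map
sends `u₀` to the other root `u₂` of `y ↦ J(u₁, y) - J(u₁, u₀)` (Vieta), on which `J` is unchanged. -/

def qrtBiquadratic {R : Type*} [CommRing R] (a₁ a₂ a₃ a₄ a₅ x y : R) : R :=
  a₁ * x ^ 2 * y ^ 2 + a₂ * x * y * (x + y) + a₃ * (x ^ 2 + y ^ 2) + a₄ * x * y + a₅ * (x + y)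

theorem qrtBiquadratic_sub_qrtBiquadratic {R : Type*} [CommRing R] (a₁ a₂ a₃ a₄ a₅ u₀ u₁ u₂ : R) :
    qrtBiquadratic a₁ a₂ a₃ a₄ a₅ u₁ u₂ - qrtBiquadratic a₁ a₂ a₃ a₄ a₅ u₀ u₁ =
      (u₂ - u₀) * ((a₁ * u₁ ^ 2 + a₂ * u₁ + a₃) * (u₂ + u₀) + (a₂ * u₁ ^ 2 + a₄ * u₁ + a₅)) := by
  unfold qrtBiquadratic
  ring

theorem stmt_12 {K : Type*} [Field K] (a₁ a₂ a₃ a₄ a₅ : K) (u₀ u₁ u₂ : K)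
    (hden : a₁ * u₁ ^ 2 + a₂ * u₁ + a₃ ≠ 0)
    (h : u₂ + u₀ = -((a₂ * u₁ ^ 2 + a₄ * u₁ + a₅) / (a₁ * u₁ ^ 2 + a₂ * u₁ + a₃))) :
    a₁ * u₁ ^ 2 * u₂ ^ 2 + a₂ * u₁ * u₂ * (u₁ + u₂) + a₃ * (u₁ ^ 2 + u₂ ^ 2) + a₄ * u₁ * u₂ +
        a₅ * (u₁ + u₂) =
      a₁ * u₀ ^ 2 * u₁ ^ 2 + a₂ * u₀ * u₁ * (u₀ + u₁) + a₃ * (u₀ ^ 2 + u₁ ^ 2) + a₄ * u₀ * u₁ +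
        a₅ * (u₀ + u₁) := by
  have hvieta : (a₁ * u₁ ^ 2 + a₂ * u₁ + a₃) * (u₂ + u₀) + (a₂ * u₁ ^ 2 + a₄ * u₁ + a₅) = 0 := by
    rw [h, mul_neg, mul_div_cancel₀ _ hden, neg_add_cancel]
  rw [← sub_eq_zero]
  change qrtBiquadratic a₁ a₂ a₃ a₄ a₅ u₁ u₂ - qrtBiquadratic a₁ a₂ a₃ a₄ a₅ u₀ u₁ = 0
  rw [qrtBiquadratic_sub_qrtBiquadratic, hvieta, mul_zero]
end

section
/- The quantity I = [a₁u₀²u₁² + a₂u₀u₁(u₀+u₁) + a₃(u₀²+u₁²) + a₅(u₀+u₁) + a₆]/(u₀u₁) is invariant under the multiplicative symmetric QRT map: if u₂ satisfies u₂u₀ = (a₃u₁² + a₅u₁ + a₆)/(a₁u₁² + a₂u₁ + a₃) (with u₀, u₁, u₂ and a₁u₁² + a₂u₁ + a₃ all nonzero), then I(u₁, u₂) = I(u₀, u₁). -/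
/-!
For fixed `x`, the numerator of `I(x, y)` is a quadratic `A y² + B y + C` in `y` with
`A = a₁x² + a₂x + a₃` and `C = a₃x² + a₅x + a₆`, so `x · I(x, y) = A y + B + C / y`.
If `y y' = C / A` this equals `A (y + y') + B`, symmetric in `y, y'`: the QRT map sends `u₀` to the
other root `u₂` of the same quadratic, hence `I(u₁, u₂) = I(u₁, u₀)`, and `I` is symmetric.
-/

section

variable {K : Type*} [Field K]

theorem quadratic_div_eq_of_mul_eq {A B C y y' : K} (hy : y ≠ 0) (hy' : y' ≠ 0)
    (h : A * (y * y') = C) :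
    (A * y ^ 2 + B * y + C) / y = (A * y' ^ 2 + B * y' + C) / y' := by
  subst h
  field_simp
  ring

def qrtInvariant (a₁ a₂ a₃ a₅ a₆ x y : K) : K :=
  (a₁ * x ^ 2 * y ^ 2 + a₂ * x * y * (x + y) + a₃ * (x ^ 2 + y ^ 2) + a₅ * (x + y) + a₆) / (x * y)

variable (a₁ a₂ a₃ a₅ a₆ : K)

theorem qrtInvariant_comm (x y : K) :
    qrtInvariant a₁ a₂ a₃ a₅ a₆ x y = qrtInvariant a₁ a₂ a₃ a₅ a₆ y x := by
  unfold qrtInvariant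
  rw [mul_comm y x]
  ring

theorem qrtInvariant_eq_quadratic_div (x y : K) :
    qrtInvariant a₁ a₂ a₃ a₅ a₆ x y =
      ((a₁ * x ^ 2 + a₂ * x + a₃) * y ^ 2 + (a₂ * x ^ 2 + a₅) * y + (a₃ * x ^ 2 + a₅ * x + a₆))
        / y / x := by
  unfold qrtInvariant
  rw [div_div, mul_comm y x]
  ring

theorem qrtInvariant_eq_of_mul_eq {x y y' : K} (hy : y ≠ 0) (hy' : y' ≠ 0)
    (h : (a₁ * x ^ 2 + a₂ * x + a₃) * (y * y') = a₃ * x ^ 2 + a₅ * x + a₆) :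
    qrtInvariant a₁ a₂ a₃ a₅ a₆ x y = qrtInvariant a₁ a₂ a₃ a₅ a₆ x y' := by
  rw [qrtInvariant_eq_quadratic_div, qrtInvariant_eq_quadratic_div,
    quadratic_div_eq_of_mul_eq hy hy' h]

end

theorem stmt_13_general {K : Type*} [Field K] (a₁ a₂ a₃ a₅ a₆ : K) (u₀ u₁ u₂ : K)
    (h0 : u₀ ≠ 0) (h2 : u₂ ≠ 0)
    (hden : a₁ * u₁ ^ 2 + a₂ * u₁ + a₃ ≠ 0)
    (h : u₂ * u₀ = (a₃ * u₁ ^ 2 + a₅ * u₁ + a₆) / (a₁ * u₁ ^ 2 + a₂ * u₁ + a₃)) :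
    (a₁ * u₁ ^ 2 * u₂ ^ 2 + a₂ * u₁ * u₂ * (u₁ + u₂) + a₃ * (u₁ ^ 2 + u₂ ^ 2) + a₅ * (u₁ + u₂) + a₆) /
        (u₁ * u₂) =
      (a₁ * u₀ ^ 2 * u₁ ^ 2 + a₂ * u₀ * u₁ * (u₀ + u₁) + a₃ * (u₀ ^ 2 + u₁ ^ 2) + a₅ * (u₀ + u₁) + a₆) /
        (u₀ * u₁) := by
  have hroots : (a₁ * u₁ ^ 2 + a₂ * u₁ + a₃) * (u₂ * u₀) = a₃ * u₁ ^ 2 + a₅ * u₁ + a₆ := by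
    rw [h, mul_div_cancel₀ _ hden]
  change qrtInvariant a₁ a₂ a₃ a₅ a₆ u₁ u₂ = qrtInvariant a₁ a₂ a₃ a₅ a₆ u₀ u₁
  rw [qrtInvariant_eq_of_mul_eq a₁ a₂ a₃ a₅ a₆ h2 h0 hroots, qrtInvariant_comm]

theorem stmt_13 {K : Type*} [Field K] (a₁ a₂ a₃ a₅ a₆ : K) (u₀ u₁ u₂ : K)
    (h0 : u₀ ≠ 0) (h1 : u₁ ≠ 0) (h2 : u₂ ≠ 0)
    (hden : a₁ * u₁ ^ 2 + a₂ * u₁ + a₃ ≠ 0)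
    (h : u₂ * u₀ = (a₃ * u₁ ^ 2 + a₅ * u₁ + a₆) / (a₁ * u₁ ^ 2 + a₂ * u₁ + a₃)) :
    (a₁ * u₁ ^ 2 * u₂ ^ 2 + a₂ * u₁ * u₂ * (u₁ + u₂) + a₃ * (u₁ ^ 2 + u₂ ^ 2) + a₅ * (u₁ + u₂) + a₆) /
        (u₁ * u₂) =
      (a₁ * u₀ ^ 2 * u₁ ^ 2 + a₂ * u₀ * u₁ * (u₀ + u₁) + a₃ * (u₀ ^ 2 + u₁ ^ 2) + a₅ * (u₀ + u₁) + a₆) /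
        (u₀ * u₁) :=
  stmt_13_general a₁ a₂ a₃ a₅ a₆ u₀ u₁ u₂ h0 h2 hden h
end

section
/- Suppose an orbit of the multiplicative symmetric QRT map u_{n+1}u_{n-1} = (a₃u_n² + a₅u_n + a₆)/(a₁u_n² + a₂u_n + a₃) starting at (u₀, u₁) has invariant value I = -a₄, where I is as defined above. Then the same sequence (u_n) satisfies the additive QRT map u_{n+1} + u_{n-1} = -(a₂u_n² + a₄u_n + a₅)/(a₁u_n² + a₂u_n + a₃), and its additive invariant J = a₁u₀²u₁² + a₂u₀u₁(u₀+u₁) + a₃(u₀²+u₁²) + a₄u₀u₁ + a₅(u₀+u₁) takes the value J = -a₆. -/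
/-!
Write `Q(x, y) = A(x) y² + B(x) y + C(x)` for the symmetric biquadratic
`a₁x²y² + a₂xy(x+y) + a₃(x²+y²) + a₄xy + a₅(x+y) + a₆`, so that `Q = x y (I + a₄) = J + a₆`.
Cleared of denominators, the multiplicative map says `A(y) x z = C(y)` for consecutive terms
`x, y, z`, and `z Q(x, y) - x Q(y, z) = (x - z) (A(y) x z - C(y))`; hence `I` is conserved.
If `I = -a₄` then `Q` vanishes on every pair of consecutive terms, so `x` is a root of the quadratic
`Q(y, ·)` whose product of roots is `C(y) / A(y) = x z`; by Vieta `x + z = -B(y) / A(y)`.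
-/

namespace QRT

variable {K : Type*} [Field K] (a₁ a₂ a₃ a₄ a₅ a₆ : K)

def multInvariant (x y : K) : K :=
  (a₁ * x ^ 2 * y ^ 2 + a₂ * x * y * (x + y) + a₃ * (x ^ 2 + y ^ 2) + a₅ * (x + y) + a₆) / (x * y)

def addInvariant (x y : K) : K :=
  a₁ * x ^ 2 * y ^ 2 + a₂ * x * y * (x + y) + a₃ * (x ^ 2 + y ^ 2) + a₄ * x * y + a₅ * (x + y)

variable {a₁ a₂ a₃ a₄ a₅ a₆}

theorem multInvariant_eq_of_mul_eq {x y z : K} (hx : x ≠ 0) (hy : y ≠ 0) (hz : z ≠ 0)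
    (hA : a₁ * y ^ 2 + a₂ * y + a₃ ≠ 0)
    (h : z * x = (a₃ * y ^ 2 + a₅ * y + a₆) / (a₁ * y ^ 2 + a₂ * y + a₃)) :
    multInvariant a₁ a₂ a₃ a₅ a₆ x y = multInvariant a₁ a₂ a₃ a₅ a₆ y z := by
  rw [eq_div_iff hA] at h
  rw [multInvariant, multInvariant, div_eq_div_iff (mul_ne_zero hx hy) (mul_ne_zero hy hz)]
  linear_combination y * (x - z) * h

theorem multInvariant_orbit_eq {u : ℤ → K} (hu : ∀ n, u n ≠ 0)
    (hA : ∀ n, a₁ * u n ^ 2 + a₂ * u n + a₃ ≠ 0)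
    (hmul : ∀ n, u (n + 1) * u (n - 1) =
      (a₃ * u n ^ 2 + a₅ * u n + a₆) / (a₁ * u n ^ 2 + a₂ * u n + a₃)) (n : ℤ) :
    multInvariant a₁ a₂ a₃ a₅ a₆ (u n) (u (n + 1)) = multInvariant a₁ a₂ a₃ a₅ a₆ (u 0) (u 1) := by
  have hperiodic :
      Function.Periodic (fun n ↦ multInvariant a₁ a₂ a₃ a₅ a₆ (u n) (u (n + 1))) 1 := by
    intro n
    have h := hmul (n + 1)
    rw [add_sub_cancel_right] at h
    exact (multInvariant_eq_of_mul_eq (hu n) (hu (n + 1)) (hu (n + 1 + 1)) (hA (n + 1)) h).symm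
  simpa using hperiodic.int_mul_eq n

theorem addInvariant_eq_of_multInvariant_eq {x y : K} (hx : x ≠ 0) (hy : y ≠ 0)
    (h : multInvariant a₁ a₂ a₃ a₅ a₆ x y = -a₄) : addInvariant a₁ a₂ a₃ a₄ a₅ x y = -a₆ := by
  rw [multInvariant, div_eq_iff (mul_ne_zero hx hy)] at h
  rw [addInvariant]
  linear_combination h

theorem add_eq_of_mul_eq {x y z : K} (hx : x ≠ 0) (hA : a₁ * y ^ 2 + a₂ * y + a₃ ≠ 0)
    (hJ : addInvariant a₁ a₂ a₃ a₄ a₅ x y = -a₆)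
    (h : z * x = (a₃ * y ^ 2 + a₅ * y + a₆) / (a₁ * y ^ 2 + a₂ * y + a₃)) :
    z + x = -((a₂ * y ^ 2 + a₄ * y + a₅) / (a₁ * y ^ 2 + a₂ * y + a₃)) := by
  rw [eq_div_iff hA] at h
  rw [addInvariant] at hJ
  have hvieta : x * ((a₁ * y ^ 2 + a₂ * y + a₃) * (z + x) + (a₂ * y ^ 2 + a₄ * y + a₅)) = 0 := by
    linear_combination hJ + h
  rw [← neg_div, eq_div_iff hA]
  linear_combination (mul_eq_zero.mp hvieta).resolve_left hx

end QRT

open QRT in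
theorem stmt_14 {K : Type*} [Field K] (a₁ a₂ a₃ a₄ a₅ a₆ : K) (u : ℤ → K)
    (hune : ∀ n : ℤ, u n ≠ 0)
    (hden : ∀ n : ℤ, a₁ * u n ^ 2 + a₂ * u n + a₃ ≠ 0)
    (hmul : ∀ n : ℤ, u (n + 1) * u (n - 1) =
      (a₃ * u n ^ 2 + a₅ * u n + a₆) / (a₁ * u n ^ 2 + a₂ * u n + a₃))
    (hI : (a₁ * u 0 ^ 2 * u 1 ^ 2 + a₂ * u 0 * u 1 * (u 0 + u 1) + a₃ * (u 0 ^ 2 + u 1 ^ 2) +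
      a₅ * (u 0 + u 1) + a₆) / (u 0 * u 1) = -a₄) :
    (∀ n : ℤ, u (n + 1) + u (n - 1) =
      -((a₂ * u n ^ 2 + a₄ * u n + a₅) / (a₁ * u n ^ 2 + a₂ * u n + a₃))) ∧
    a₁ * u 0 ^ 2 * u 1 ^ 2 + a₂ * u 0 * u 1 * (u 0 + u 1) + a₃ * (u 0 ^ 2 + u 1 ^ 2) +
      a₄ * u 0 * u 1 + a₅ * (u 0 + u 1) = -a₆ := by
  have hI' : multInvariant a₁ a₂ a₃ a₅ a₆ (u 0) (u 1) = -a₄ := hI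
  refine ⟨fun n ↦ ?_, addInvariant_eq_of_multInvariant_eq (hune 0) (hune 1) hI'⟩
  have hIn := multInvariant_orbit_eq hune hden hmul (n - 1)
  rw [sub_add_cancel] at hIn
  exact add_eq_of_mul_eq (hune (n - 1)) (hden n)
    (addInvariant_eq_of_multInvariant_eq (hune (n - 1)) (hune n) (hIn.trans hI')) (hmul n)
end

section
/- Let K be a field with α, J ∈ K, and let (u_n) satisfy the DTKQ-2 recurrence u_{n+1} + u_{n-1} = (α - u_n²)/u_n with u_n ≠ 0 for all n, and suppose (u_nu_{n-1} - α)(u_n + u_{n-1}) = J for all n. Then u also satisfies the multiplicative recurrence u_{n+1}u_{n-1} = -(αu_n + J)/u_n. -/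
theorem stmt_15 {K : Type*} [Field K] (α J : K) (u : ℤ → K)
    (hune : ∀ n : ℤ, u n ≠ 0)
    (hrec : ∀ n : ℤ, u (n + 1) + u (n - 1) = (α - u n ^ 2) / u n)
    (hJ : ∀ n : ℤ, (u n * u (n - 1) - α) * (u n + u (n - 1)) = J) :
    ∀ n : ℤ, u (n + 1) * u (n - 1) = -((α * u n + J) / u n) := by
  intro n
  have h1 := hrec n
  have h2 := hJ n
  have h := hune n
  field_simp at h1 ⊢
  linear_combination u (n - 1) * h1 - h2
end

section
/- Let η : ℤ → ℤ satisfy the third-order linear recurrence η_{n+3} - η_{n+2} - η_{n+1} + η_n = p_n - q_n, where p_{mod 7} = [1,0,0,0,1,0,0] and q_{mod 7} = [0,0,1,0,0,1,1] are 7-periodic integer sequences. Suppose (τ_n) satisfies the autonomous Somos-5 recurrence τ_{n-3}τ_{n+2} = γτ_{n-2}τ_{n+1} + δτ_{n-1}τ_n over a field K with all terms nonzero, and define d_n by τ_n = u₀^{η_{n+3}} u₁^{η_{n-1}} d_n for nonzero u₀, u₁ ∈ K. Then d satisfies the non-autonomous Somos-5 recurrence d_{n-3}d_{n+2} = γ_n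 d_{n-2}d_{n+1} + δ_n d_{n-1}d_n with γ_n = γ u₀^{p_{n+1}} u₁^{p_{n-3}} and δ_n = δ u₀^{q_{n+1}} u₁^{q_{n-3}}. -/
/-!
Write `τ n = g n * d n` with `g n = u₀ ^ η (n + 3) * u₁ ^ η (n - 1)`. Dividing the Somos-5 relation
for `τ` by `g (n - 3) * g (n + 2)` gives one for `d` whose coefficients are `γ` and `δ` times the
ratios `g (n - 2) g (n + 1) / (g (n - 3) g (n + 2))` and `g (n - 1) g n / (g (n - 3) g (n + 2))`.
Summing the recurrence for `η` over three consecutive indices and using the identity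
`p m + p (m + 1) + p (m + 2) = q m + q (m + 2)`, which is checked on one period, shows that these
ratios are `u₀ ^ p (n + 1) * u₁ ^ p (n - 3)` and `u₀ ^ q (n + 1) * u₁ ^ q (n - 3)`.
-/

open Function

theorem Function.Periodic.apply_emod {α : Type*} {f : ℤ → α} {c : ℤ} (h : Periodic f c) (m : ℤ) :
    f (m % c) = f m := by
  rw [Int.emod_def, mul_comm]
  exact_mod_cast h.sub_int_mul_eq (m / c)

theorem p_add_p_add_p_eq_q_add_q {p q : ℤ → ℤ} (hp : Periodic p 7) (hq : Periodic q 7)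
    (hp0 : p 0 = 1) (hp1 : p 1 = 0) (hp2 : p 2 = 0) (hp3 : p 3 = 0)
    (hp4 : p 4 = 1) (hp5 : p 5 = 0) (hp6 : p 6 = 0)
    (hq0 : q 0 = 0) (hq1 : q 1 = 0) (hq2 : q 2 = 1) (hq3 : q 3 = 0)
    (hq4 : q 4 = 0) (hq5 : q 5 = 1) (hq6 : q 6 = 1) (m : ℤ) :
    p m + p (m + 1) + p (m + 2) = q m + q (m + 2) := by
  set F : ℤ → ℤ := fun m => p m + p (m + 1) + p (m + 2) - (q m + q (m + 2)) with hF
  have hFper : Periodic F 7 :=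
    ((hp.add (hp.add_const 1)).add (hp.add_const 2)).sub (hq.add (hq.add_const 2))
  have hp7 : p 7 = p 0 := hp 0
  have hp8 : p 8 = p 1 := hp 1
  have hq7 : q 7 = q 0 := hq 0
  have hq8 : q 8 = q 1 := hq 1
  suffices F (m % 7) = 0 by rwa [hFper.apply_emod, hF, sub_eq_zero] at this
  have hlo : 0 ≤ m % 7 := by omega
  have hhi : m % 7 < 7 := by omega
  interval_cases m % 7 <;> norm_num [hF, *]

theorem eta_add_eta_eq_q {p q η : ℤ → ℤ}
    (hη : ∀ n, η (n + 3) - η (n + 2) - η (n + 1) + η n = p n - q n)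
    (hpq : ∀ m, p m + p (m + 1) + p (m + 2) = q m + q (m + 2)) (m : ℤ) :
    η (m + 2) + η (m + 3) = q (m + 1) + (η m + η (m + 5)) := by
  have h0 := hη m
  have h1 := hη (m + 1)
  have h2 := hη (m + 2)
  simp only [add_assoc, Int.reduceAdd] at h1 h2
  linarith [hpq m]

theorem eta_add_eta_eq_p {p q η : ℤ → ℤ}
    (hη : ∀ n, η (n + 3) - η (n + 2) - η (n + 1) + η n = p n - q n)
    (hpq : ∀ m, p m + p (m + 1) + p (m + 2) = q m + q (m + 2)) (m : ℤ) :
    η (m + 1) + η (m + 4) = p (m + 1) + (η m + η (m + 5)) := by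
  have h1 := hη (m + 1)
  simp only [add_assoc, Int.reduceAdd] at h1
  linarith [eta_add_eta_eq_q hη hpq m]

theorem somos5_of_gauge {K : Type*} [Field K] {τ g d : ℤ → K} {γ δ γ' δ' : K} (n : ℤ)
    (hτ : τ (n - 3) * τ (n + 2) = γ * (τ (n - 2) * τ (n + 1)) + δ * (τ (n - 1) * τ n))
    (hgauge : ∀ k, τ k = g k * d k) (hg : g (n - 3) * g (n + 2) ≠ 0)
    (hγ : γ * (g (n - 2) * g (n + 1)) = γ' * (g (n - 3) * g (n + 2)))
    (hδ : δ * (g (n - 1) * g n) = δ' * (g (n - 3) * g (n + 2))) :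
    d (n - 3) * d (n + 2) = γ' * (d (n - 2) * d (n + 1)) + δ' * (d (n - 1) * d n) := by
  apply mul_left_cancel₀ hg
  simp only [hgauge] at hτ
  linear_combination hτ + d (n - 2) * d (n + 1) * hγ + d (n - 1) * d n * hδ

theorem zpow_mul_zpow_eq_of_add_eq {K : Type*} [Field K] {u₀ u₁ : K} (hu₀ : u₀ ≠ 0) (hu₁ : u₁ ≠ 0)
    {a₁ a₂ a₃ a₄ b₁ b₂ b₃ b₄ c₀ c₁ : ℤ}
    (ha : a₁ + a₂ = c₀ + (a₃ + a₄)) (hb : b₁ + b₂ = c₁ + (b₃ + b₄)) :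
    u₀ ^ a₁ * u₁ ^ b₁ * (u₀ ^ a₂ * u₁ ^ b₂) =
      u₀ ^ c₀ * u₁ ^ c₁ * (u₀ ^ a₃ * u₁ ^ b₃ * (u₀ ^ a₄ * u₁ ^ b₄)) := by
  calc u₀ ^ a₁ * u₁ ^ b₁ * (u₀ ^ a₂ * u₁ ^ b₂) = u₀ ^ (a₁ + a₂) * u₁ ^ (b₁ + b₂) := by
        rw [zpow_add₀ hu₀, zpow_add₀ hu₁]; ring
    _ = _ := by simp only [ha, hb, zpow_add₀ hu₀, zpow_add₀ hu₁]; ring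

def somosGauge {K : Type*} [Field K] (u₀ u₁ : K) (η : ℤ → ℤ) (n : ℤ) : K :=
  u₀ ^ η (n + 3) * u₁ ^ η (n - 1)

section somosGauge

variable {K : Type*} [Field K] {u₀ u₁ : K} {η : ℤ → ℤ}

theorem somosGauge_ne_zero (hu₀ : u₀ ≠ 0) (hu₁ : u₁ ≠ 0) (n : ℤ) : somosGauge u₀ u₁ η n ≠ 0 :=
  mul_ne_zero (zpow_ne_zero _ hu₀) (zpow_ne_zero _ hu₁)

theorem somosGauge_mul_somosGauge_of_p (hu₀ : u₀ ≠ 0) (hu₁ : u₁ ≠ 0) {p : ℤ → ℤ}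
    (hη : ∀ m, η (m + 1) + η (m + 4) = p (m + 1) + (η m + η (m + 5))) (n : ℤ) :
    somosGauge u₀ u₁ η (n - 2) * somosGauge u₀ u₁ η (n + 1) =
      u₀ ^ p (n + 1) * u₁ ^ p (n - 3) *
        (somosGauge u₀ u₁ η (n - 3) * somosGauge u₀ u₁ η (n + 2)) :=
  zpow_mul_zpow_eq_of_add_eq hu₀ hu₁ (by convert hη n using 3 <;> ring_nf)
    (by convert hη (n - 4) using 3 <;> ring_nf)

theorem somosGauge_mul_somosGauge_of_q (hu₀ : u₀ ≠ 0) (hu₁ : u₁ ≠ 0) {q : ℤ → ℤ}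
    (hη : ∀ m, η (m + 2) + η (m + 3) = q (m + 1) + (η m + η (m + 5))) (n : ℤ) :
    somosGauge u₀ u₁ η (n - 1) * somosGauge u₀ u₁ η n =
      u₀ ^ q (n + 1) * u₁ ^ q (n - 3) *
        (somosGauge u₀ u₁ η (n - 3) * somosGauge u₀ u₁ η (n + 2)) :=
  zpow_mul_zpow_eq_of_add_eq hu₀ hu₁ (by convert hη n using 3 <;> ring_nf)
    (by convert hη (n - 4) using 3 <;> ring_nf)

end somosGauge

theorem stmt_19_general {K : Type*} [Field K] (γ δ u₀ u₁ : K)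
    (hu₀ : u₀ ≠ 0) (hu₁ : u₁ ≠ 0)
    (p q : ℤ → ℤ)
    (hp7 : ∀ n : ℤ, p (n + 7) = p n) (hq7 : ∀ n : ℤ, q (n + 7) = q n)
    (hp0 : p 0 = 1) (hp1 : p 1 = 0) (hp2 : p 2 = 0) (hp3 : p 3 = 0)
    (hp4 : p 4 = 1) (hp5 : p 5 = 0) (hp6 : p 6 = 0)
    (hq0 : q 0 = 0) (hq1 : q 1 = 0) (hq2 : q 2 = 1) (hq3 : q 3 = 0)
    (hq4 : q 4 = 0) (hq5 : q 5 = 1) (hq6 : q 6 = 1)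
    (η : ℤ → ℤ)
    (hη : ∀ n : ℤ, η (n + 3) - η (n + 2) - η (n + 1) + η n = p n - q n)
    (τ d : ℤ → K)
    (hτ : ∀ n : ℤ, τ (n - 3) * τ (n + 2) = γ * (τ (n - 2) * τ (n + 1)) + δ * (τ (n - 1) * τ n))
    (hgauge : ∀ n : ℤ, τ n = u₀ ^ η (n + 3) * u₁ ^ η (n - 1) * d n) :
    ∀ n : ℤ, d (n - 3) * d (n + 2) =
      (γ * u₀ ^ p (n + 1) * u₁ ^ p (n - 3)) * (d (n - 2) * d (n + 1)) +
      (δ * u₀ ^ q (n + 1) * u₁ ^ q (n - 3)) * (d (n - 1) * d n) := by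
  have hpq := p_add_p_add_p_eq_q_add_q hp7 hq7 hp0 hp1 hp2 hp3 hp4 hp5 hp6 hq0 hq1 hq2 hq3 hq4 hq5 hq6
  intro n
  refine somos5_of_gauge (g := somosGauge u₀ u₁ η) n (hτ n) hgauge
    (mul_ne_zero (somosGauge_ne_zero hu₀ hu₁ _) (somosGauge_ne_zero hu₀ hu₁ _)) ?_ ?_
  · rw [somosGauge_mul_somosGauge_of_p hu₀ hu₁ (eta_add_eta_eq_p hη hpq)]
    ring
  · rw [somosGauge_mul_somosGauge_of_q hu₀ hu₁ (eta_add_eta_eq_q hη hpq)]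
    ring

theorem stmt_19 {K : Type*} [Field K] (γ δ u₀ u₁ : K)
    (hu₀ : u₀ ≠ 0) (hu₁ : u₁ ≠ 0)
    (p q : ℤ → ℤ)
    (hp7 : ∀ n : ℤ, p (n + 7) = p n) (hq7 : ∀ n : ℤ, q (n + 7) = q n)
    (hp0 : p 0 = 1) (hp1 : p 1 = 0) (hp2 : p 2 = 0) (hp3 : p 3 = 0)
    (hp4 : p 4 = 1) (hp5 : p 5 = 0) (hp6 : p 6 = 0)
    (hq0 : q 0 = 0) (hq1 : q 1 = 0) (hq2 : q 2 = 1) (hq3 : q 3 = 0)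
    (hq4 : q 4 = 0) (hq5 : q 5 = 1) (hq6 : q 6 = 1)
    (η : ℤ → ℤ)
    (hη : ∀ n : ℤ, η (n + 3) - η (n + 2) - η (n + 1) + η n = p n - q n)
    (τ d : ℤ → K) (hτne : ∀ n : ℤ, τ n ≠ 0)
    (hτ : ∀ n : ℤ, τ (n - 3) * τ (n + 2) = γ * (τ (n - 2) * τ (n + 1)) + δ * (τ (n - 1) * τ n))
    (hgauge : ∀ n : ℤ, τ n = u₀ ^ η (n + 3) * u₁ ^ η (n - 1) * d n) :
    ∀ n : ℤ, d (n - 3) * d (n + 2) =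
      (γ * u₀ ^ p (n + 1) * u₁ ^ p (n - 3)) * (d (n - 2) * d (n + 1)) +
      (δ * u₀ ^ q (n + 1) * u₁ ^ q (n - 3)) * (d (n - 1) * d n) :=
  stmt_19_general γ δ u₀ u₁ hu₀ hu₁ p q hp7 hq7 hp0 hp1 hp2 hp3 hp4 hp5 hp6 hq0 hq1 hq2 hq3 hq4 hq5
    hq6 η hη τ d hτ hgauge
end
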